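/- Let G = (V, E) be a connected graph and Ĝ = (V, E ∪ F) an augmentation. For e = {s,t} ∈ E ∪ F, the inequality x_e ≤ 1 defines a facet of LMC(G, Ĝ) if and only if there is no uv ∈ F \ {e} such that both s and t are uv-cut-nodes with respect to G. -/

import Mathlib

open Finset

open scoped Classical

variable {V : Type*}

/-- A decomposition of a graph `G`: a partition of the node set all of whose blocks
induce connected subgraphs. -/
def IsDecomposition (G : SimpleGraph V) (P : Set (Set V)) : Prop :=
  Setoid.IsPartition P ∧ ∀ U ∈ P, (G.induce U).Connected

/-- Two nodes lie in a common block of `P`. -/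
def SameBlock (P : Set (Set V)) (u v : V) : Prop :=
  ∃ U ∈ P, u ∈ U ∧ v ∈ U

/-- The edge `e` straddles two distinct blocks of `P`. -/
def Crosses (P : Set (Set V)) (e : Sym2 V) : Prop :=
  ∃ u v, e = s(u, v) ∧ ¬ SameBlock P u v

/-- The multicut of `G` induced by a decomposition `P`. -/
def inducedMulticut (G : SimpleGraph V) (P : Set (Set V)) : Set (Sym2 V) :=
  {e | e ∈ G.edgeSet ∧ Crosses P e}

/-- `M` is a multicut of `G`. -/
def IsMulticut (G : SimpleGraph V) (M : Set (Sym2 V)) : Prop :=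
  ∃ P, IsDecomposition G P ∧ M = inducedMulticut G P

/-- The characteristic vector (in the ambient space `Sym2 V → ℝ`, with coordinates
outside the edge set of `H` pinned to `0`) of the multicut of `H` induced by `P`. -/
noncomputable def multicutVec (H : SimpleGraph V) (P : Set (Set V)) : Sym2 V → ℝ :=
  fun e => if e ∈ H.edgeSet ∧ Crosses P e then 1 else 0

/-- Characteristic vectors of multicuts of `H` lifted from `G`. -/
def liftedVectors (G H : SimpleGraph V) : Set (Sym2 V → ℝ) :=
  {x | ∃ P, IsDecomposition G P ∧ x = multicutVec H P}

/-- The lifted multicut polytope with respect to `G` and `H`. -/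
def LMC (G H : SimpleGraph V) : Set (Sym2 V → ℝ) :=
  convexHull ℝ (liftedVectors G H)

/-- The inequality `f x ≤ b` is valid for `P` and its equality set has affine dimension
`|E ∪ F| - 1`, i.e. one less than the dimension of the corresponding lifted multicut
polytope for the augmented graph `H`. -/
def DefinesFacet (H : SimpleGraph V) (P : Set (Sym2 V → ℝ))
    (f : (Sym2 V → ℝ) → ℝ) (b : ℝ) : Prop :=
  (∀ x ∈ P, f x ≤ b) ∧
  Module.finrank ℝ (affineSpan ℝ {x | x ∈ P ∧ f x = b}).direction + 1 = Nat.card H.edgeSet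

/-- A node `w` is a `u v`-cut-node of `G`: every `u v`-path in `G` passes through `w`. -/
def IsCutNode {V : Type*} (G : SimpleGraph V) (u v w : V) : Prop :=
  ∀ p : G.Walk u v, p.IsPath → w ∈ p.support

/-!
If `a` and `b` are both `uv`-cut-nodes for some edge `uv ≠ ab` of `Ĝ`, every decomposition of
`G` that separates `a` from `b` also separates `u` from `v`. Hence `x_ab ≤ x_uv` on the polytope,
and the face `x_ab = 1` lies in the affine subspace `x_ab = x_uv = 1` (all coordinates outside
`E ∪ F` vanish), of dimension at most `|E ∪ F| - 2`.

Conversely, the endpoints of every other edge `uv` of `Ĝ` are joined by a `G`-walk `p` missing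
`a` or `b`. Collapsing the support of `p` into a single block gives a vertex of the face, and its
difference with the vertex of the discrete decomposition is minus the indicator vector of the
edges of `Ĝ` with both ends on `p`. Each of these edges other than `uv` is joined by a shorter
subwalk of `p`, so by induction on the length of `p` the unit vector of `uv` lies in the
direction of the face, which therefore has dimension `|E ∪ F| - 1`.
-/

open SimpleGraph

def collapseSetoid (U : Set V) : Setoid V where
  r x y := (x ∈ U ∧ y ∈ U) ∨ x = y
  iseqv :=
    { refl := fun _ => Or.inr rfl
      symm := fun h => h.imp And.symm Eq.symm
      trans := by
        rintro x y z (⟨hx, hy⟩ | rfl) (h | rfl)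
        exacts [Or.inl ⟨hx, h.2⟩, Or.inl ⟨hx, hy⟩, Or.inl h, Or.inr rfl] }

lemma sameBlock_classes_iff (r : Setoid V) {x y : V} : SameBlock r.classes x y ↔ r x y :=
  r.rel_iff_exists_classes.symm

lemma crosses_mk_iff {P : Set (Set V)} {x y : V} : Crosses P s(x, y) ↔ ¬ SameBlock P x y := by
  refine ⟨?_, fun h => ⟨x, y, rfl, h⟩⟩
  rintro ⟨u, v, huv, h⟩ ⟨U, hU, hx, hy⟩
  rcases Sym2.eq_iff.mp huv with ⟨rfl, rfl⟩ | ⟨rfl, rfl⟩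
  exacts [h ⟨U, hU, hx, hy⟩, h ⟨U, hU, hy, hx⟩]

lemma crosses_collapse_iff {U : Set V} {x y : V} (hxy : x ≠ y) :
    Crosses (collapseSetoid U).classes s(x, y) ↔ s(x, y) ∉ U.sym2 := by
  rw [crosses_mk_iff, sameBlock_classes_iff, Set.mk_mem_sym2_iff]
  exact not_congr (or_iff_left hxy)

lemma isDecomposition_collapse {G : SimpleGraph V} {U : Set V} (hU : (G.induce U).Preconnected) :
    IsDecomposition G (collapseSetoid U).classes := by
  refine ⟨Setoid.isPartition_classes _, ?_⟩
  rintro _ ⟨y, rfl⟩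
  by_cases hy : y ∈ U
  · have hclass : {x | collapseSetoid U x y} = U := by
      ext x
      exact ⟨by rintro (⟨hx, -⟩ | rfl); exacts [hx, hy], fun hx => Or.inl ⟨hx, hy⟩⟩
    rw [hclass]
    exact @Connected.mk _ _ hU ⟨⟨y, hy⟩⟩
  · have hclass : {x | collapseSetoid U x y} = {y} := by
      ext x
      exact ⟨by rintro (⟨-, h⟩ | rfl); exacts [absurd h hy, rfl], fun hx => Or.inr hx⟩
    rw [hclass, induce_singleton_eq_top]
    exact connected_top

lemma isCutNode_left (G : SimpleGraph V) (u v : V) : IsCutNode G u v u :=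
  fun p _ => p.start_mem_support

lemma isCutNode_right (G : SimpleGraph V) (u v : V) : IsCutNode G u v v :=
  fun p _ => p.end_mem_support

lemma IsCutNode.mem_support {G : SimpleGraph V} {u v w : V} (h : IsCutNode G u v w)
    (p : G.Walk u v) : w ∈ p.support :=
  p.support_bypass_subset_support (h _ p.bypass_isPath)

lemma Crosses.of_isCutNode {G : SimpleGraph V} {P : Set (Set V)} (hP : IsDecomposition G P)
    {a b u v : V} (ha : IsCutNode G u v a) (hb : IsCutNode G u v b) (h : Crosses P s(a, b)) :
    Crosses P s(u, v) := by
  rw [crosses_mk_iff] at h ⊢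
  rintro ⟨U, hU, hu, hv⟩
  obtain ⟨w⟩ := (hP.2 U hU).preconnected ⟨u, hu⟩ ⟨v, hv⟩
  have hw : ∀ z ∈ (w.map (Embedding.induce U).toHom).support, z ∈ U := by
    simp only [Walk.support_map, List.mem_map]
    rintro _ ⟨z, -, rfl⟩
    exact z.2
  exact h ⟨U, hU, hw a (ha.mem_support _), hw b (hb.mem_support _)⟩

lemma SimpleGraph.Walk.exists_shorter_walk_of_mem_support {G : SimpleGraph V} {u v x y : V}
    (p : G.Walk u v) (hx : x ∈ p.support) (hy : y ∈ p.support) (hne : s(x, y) ≠ s(u, v)) :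
    ∃ q : G.Walk x y, q.support ⊆ p.support ∧ q.length < p.length := by
  have hp := congrArg Walk.length (p.take_spec hx)
  rw [Walk.length_append] at hp
  by_cases hy' : y ∈ (p.dropUntil x hx).support
  · set r := p.dropUntil x hx
    have hr := congrArg Walk.length (r.take_spec hy')
    rw [Walk.length_append] at hr
    refine ⟨r.takeUntil y hy', fun z hz => p.support_dropUntil_subset_support hx
      (r.support_takeUntil_subset_support hy' hz), ?_⟩
    by_contra! hlen
    have hux := (p.takeUntil x hx).eq_of_length_eq_zero (by omega)
    have hyv := (r.dropUntil y hy').eq_of_length_eq_zero (by omega)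
    exact hne (by rw [hux, hyv])
  · set r := p.takeUntil x hx
    have hy'' : y ∈ r.support := by
      rw [← p.take_spec hx, Walk.mem_support_append_iff] at hy
      exact hy.resolve_right hy'
    have hr := congrArg Walk.length (r.take_spec hy'')
    rw [Walk.length_append] at hr
    refine ⟨(r.dropUntil y hy'').reverse, ?_, ?_⟩
    · rw [Walk.support_reverse]
      exact fun z hz => p.support_takeUntil_subset_support hx
        (r.support_dropUntil_subset_support hy'' (List.mem_reverse.mp hz))
    · rw [Walk.length_reverse]
      by_contra! hlen
      have huy := (r.takeUntil y hy'').eq_of_length_eq_zero (by omega)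
      have hxv := (p.dropUntil x hx).eq_of_length_eq_zero (by omega)
      exact hne (by rw [huy, hxv, Sym2.eq_swap])

lemma multicutVec_collapse_add_sum [Fintype V] (H : SimpleGraph V) (U : Set V) :
    multicutVec H (collapseSetoid U).classes +
        ∑ e ∈ (H.edgeSet ∩ U.sym2).toFinset, Pi.single e 1 =
      multicutVec H (collapseSetoid ∅).classes := by
  ext e
  induction e with
  | _ x y =>
    by_cases hxy : H.Adj x y
    · by_cases hx : x ∈ U <;> by_cases hy : y ∈ U <;>
        simp [multicutVec, Finset.sum_apply, Pi.single_apply, hxy, crosses_collapse_iff hxy.ne,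
          hx, hy]
    · simp [multicutVec, Finset.sum_apply, Pi.single_apply, hxy]

lemma multicutVec_mem_LMC {G H : SimpleGraph V} {P : Set (Set V)} (hP : IsDecomposition G P) :
    multicutVec H P ∈ LMC G H :=
  subset_convexHull ℝ _ ⟨P, hP, rfl⟩

lemma LMC_subset {G H : SimpleGraph V} {C : Set (Sym2 V → ℝ)} (hC : Convex ℝ C)
    (h : ∀ P, IsDecomposition G P → multicutVec H P ∈ C) : LMC G H ⊆ C :=
  convexHull_min (by rintro _ ⟨P, hP, rfl⟩; exact h P hP) hC

lemma apply_le_one_of_mem_LMC {G H : SimpleGraph V} {x : Sym2 V → ℝ} (hx : x ∈ LMC G H)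
    (e : Sym2 V) : x e ≤ 1 :=
  LMC_subset (convex_halfSpace_le (LinearMap.proj e).isLinear 1)
    (fun P _ => show multicutVec H P e ≤ 1 by unfold multicutVec; split_ifs <;> norm_num) hx

lemma apply_eq_zero_of_mem_LMC {G H : SimpleGraph V} {x : Sym2 V → ℝ} (hx : x ∈ LMC G H)
    {e : Sym2 V} (he : e ∉ H.edgeSet) : x e = 0 :=
  LMC_subset (convex_hyperplane (LinearMap.proj e).isLinear 0)
    (fun P _ => show multicutVec H P e = 0 from if_neg fun h => he h.1) hx

lemma apply_le_apply_of_isCutNode {G H : SimpleGraph V} {x : Sym2 V → ℝ} (hx : x ∈ LMC G H)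
    {a b u v : V} (huv : H.Adj u v) (ha : IsCutNode G u v a) (hb : IsCutNode G u v b) :
    x s(a, b) ≤ x s(u, v) := by
  have h := LMC_subset (convex_halfSpace_le
      (LinearMap.proj (R := ℝ) (φ := fun _ => ℝ) s(a, b) - LinearMap.proj s(u, v)).isLinear 0)
      (fun P hP => ?_) hx
  · simpa using h
  show multicutVec H P s(a, b) - multicutVec H P s(u, v) ≤ 0
  have hcross := Crosses.of_isCutNode hP ha hb (P := P)
  unfold multicutVec
  split_ifs <;> simp_all

lemma finrank_direction_le_ncard {K κ : Type*} [Field K] [Fintype κ] {S : Set (κ → K)}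
    {B : Set κ} {c : κ → K} (hS : ∀ x ∈ S, ∀ g ∉ B, x g = c g) :
    Module.finrank K (affineSpan K S).direction ≤ B.ncard := by
  have hD : ∀ d ∈ (affineSpan K S).direction, ∀ g ∉ B, d g = 0 := by
    intro d hd g hg
    refine (show (affineSpan K S).direction ≤ LinearMap.ker (LinearMap.proj g) from ?_) hd
    rw [direction_affineSpan, vectorSpan_def, Submodule.span_le]
    rintro _ ⟨x, hx, y, hy, rfl⟩
    simp [hS x hx g hg, hS y hy g hg]
  have hinj : Function.Injective
      ((LinearMap.funLeft K K ((↑) : B → κ)).comp (affineSpan K S).direction.subtype) := by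
    rw [← LinearMap.ker_eq_bot, LinearMap.ker_eq_bot']
    intro d hd
    ext g
    by_cases hg : g ∈ B
    · exact congrFun hd ⟨g, hg⟩
    · exact hD d d.2 g hg
  have := LinearMap.finrank_le_finrank_of_injective hinj
  rwa [Module.finrank_fintype_fun_eq_card, ← Nat.card_eq_fintype_card,
    Nat.card_coe_set_eq] at this

lemma ncard_le_finrank_of_single_mem {K κ : Type*} [Field K] [Fintype κ] [DecidableEq κ]
    {W : Submodule K (κ → K)} {B : Set κ} (h : ∀ g ∈ B, Pi.single g 1 ∈ W) :
    B.ncard ≤ Module.finrank K W := by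
  have hli : LinearIndependent K (fun g : B => (⟨Pi.single g 1, h g g.2⟩ : W)) :=
    LinearIndependent.of_comp W.subtype
      ((Pi.linearIndependent_single_one κ K).comp _ Subtype.val_injective)
  rw [← Nat.card_coe_set_eq, Nat.card_eq_fintype_card]
  exact hli.fintype_card_le_finrank

section Face

variable {G H : SimpleGraph V} {a b : V}

def upperFace (G H : SimpleGraph V) (e : Sym2 V) : Set (Sym2 V → ℝ) :=
  {x | x ∈ LMC G H ∧ x e = 1}

lemma definesFacet_apply_le_one_iff {e : Sym2 V} :
    DefinesFacet H (LMC G H) (fun x => x e) 1 ↔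
      Module.finrank ℝ (affineSpan ℝ (upperFace G H e)).direction + 1 = Nat.card H.edgeSet :=
  ⟨And.right, fun h => ⟨fun _ hx => apply_le_one_of_mem_LMC hx e, h⟩⟩

lemma apply_eq_of_mem_upperFace {x : Sym2 V → ℝ} (hx : x ∈ upperFace G H s(a, b)) {u v : V}
    (huv : H.Adj u v) (ha : IsCutNode G u v a) (hb : IsCutNode G u v b) {g : Sym2 V}
    (hg : g ∉ H.edgeSet \ {s(a, b), s(u, v)}) :
    x g = if g ∈ H.edgeSet then 1 else 0 := by
  by_cases hgE : g ∈ H.edgeSet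
  · rw [if_pos hgE]
    rcases not_not.mp (fun h => hg ⟨hgE, h⟩) with rfl | rfl
    · exact hx.2
    · exact le_antisymm (apply_le_one_of_mem_LMC hx.1 _)
        (hx.2 ▸ apply_le_apply_of_isCutNode hx.1 huv ha hb)
  · rw [if_neg hgE, apply_eq_zero_of_mem_LMC hx.1 hgE]

lemma multicutVec_collapse_mem_upperFace {U : Set V} (hU : (G.induce U).Preconnected)
    (hab : H.Adj a b) (habU : ¬ (a ∈ U ∧ b ∈ U)) :
    multicutVec H (collapseSetoid U).classes ∈ upperFace G H s(a, b) := by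
  refine ⟨multicutVec_mem_LMC (isDecomposition_collapse hU), if_pos ⟨hab, ?_⟩⟩
  rwa [crosses_collapse_iff hab.ne, Set.mk_mem_sym2_iff]

lemma single_mem_direction_upperFace [Fintype V] (hab : H.Adj a b) {u v : V} (p : G.Walk u v)
    (hp : ¬ (a ∈ p.support ∧ b ∈ p.support)) (huv : s(u, v) ∈ H.edgeSet) :
    Pi.single s(u, v) 1 ∈ (affineSpan ℝ (upperFace G H s(a, b))).direction := by
  induction hn : p.length using Nat.strong_induction_on generalizing u v with
  | _ n ih =>
  set D := (affineSpan ℝ (upperFace G H s(a, b))).direction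
  set U : Set V := {z | z ∈ p.support}
  have hsum : ∑ e ∈ (H.edgeSet ∩ U.sym2).toFinset, Pi.single e 1 ∈ D := by
    rw [eq_sub_of_add_eq' (multicutVec_collapse_add_sum H U)]
    exact AffineSubspace.vsub_mem_direction
      (subset_affineSpan ℝ _
        (multicutVec_collapse_mem_upperFace Preconnected.of_subsingleton hab (by simp)))
      (subset_affineSpan ℝ _ (multicutVec_collapse_mem_upperFace
        p.connected_induce_support.preconnected hab hp))
  have huvU : s(u, v) ∈ (H.edgeSet ∩ U.sym2).toFinset := by
    simp only [Set.mem_toFinset, Set.mem_inter_iff, Set.mk_mem_sym2_iff, U]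
    exact ⟨huv, p.start_mem_support, p.end_mem_support⟩
  rw [← Finset.add_sum_erase _ _ huvU] at hsum
  refine (Submodule.add_mem_iff_left D (Submodule.sum_mem D fun e he => ?_)).mp hsum
  induction e with
  | _ x y =>
  obtain ⟨hne, hxy⟩ := Finset.mem_erase.mp he
  simp only [Set.mem_toFinset, Set.mem_inter_iff, Set.mk_mem_sym2_iff, U] at hxy
  obtain ⟨q, hqp, hqlen⟩ := p.exists_shorter_walk_of_mem_support hxy.2.1 hxy.2.2 hne
  exact ih _ (hn ▸ hqlen) q (fun h => hp ⟨hqp h.1, hqp h.2⟩) hxy.1 rfl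

lemma exists_walk_not_through_both (hab : H.Adj a b)
    (hno : ¬ ∃ u v : V, H.Adj u v ∧ ¬ G.Adj u v ∧ s(u, v) ≠ s(a, b) ∧
      IsCutNode G u v a ∧ IsCutNode G u v b)
    {u v : V} (huv : H.Adj u v) (hne : s(u, v) ≠ s(a, b)) :
    ∃ p : G.Walk u v, ¬ (a ∈ p.support ∧ b ∈ p.support) := by
  by_cases hG : G.Adj u v
  · refine ⟨hG.toWalk, fun ⟨ha, hb⟩ => hne ?_⟩
    simp only [Adj.toWalk, Walk.support_cons, Walk.support_nil, List.mem_cons,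
      List.not_mem_nil, or_false] at ha hb
    rcases ha with rfl | rfl <;> rcases hb with rfl | rfl
    exacts [absurd rfl hab.ne, rfl, Sym2.eq_swap, absurd rfl hab.ne]
  · by_contra! h
    exact hno ⟨u, v, huv, hG, hne, fun p _ => (h p).1, fun p _ => (h p).2⟩

lemma finrank_direction_upperFace_le [Fintype V] {u v : V} (huv : H.Adj u v)
    (ha : IsCutNode G u v a) (hb : IsCutNode G u v b) :
    Module.finrank ℝ (affineSpan ℝ (upperFace G H s(a, b))).direction ≤
      (H.edgeSet \ {s(a, b), s(u, v)}).ncard :=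
  finrank_direction_le_ncard fun _ hx _ hg => apply_eq_of_mem_upperFace hx huv ha hb hg

lemma ncard_le_finrank_direction_upperFace [Fintype V] (hab : H.Adj a b)
    (hno : ¬ ∃ u v : V, H.Adj u v ∧ ¬ G.Adj u v ∧ s(u, v) ≠ s(a, b) ∧
      IsCutNode G u v a ∧ IsCutNode G u v b) :
    (H.edgeSet \ {s(a, b)}).ncard ≤
      Module.finrank ℝ (affineSpan ℝ (upperFace G H s(a, b))).direction := by
  refine ncard_le_finrank_of_single_mem fun g ⟨hg, hne⟩ => ?_
  induction g with
  | _ u v =>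
  obtain ⟨p, hp⟩ := exists_walk_not_through_both hab hno hg hne
  exact single_mem_direction_upperFace hab p hp hg

end Face

theorem upper_box_facet_iff_general
    {V : Type*} [Fintype V] (G Gh : SimpleGraph V)
    (a b : V) (hab : Gh.Adj a b) :
    DefinesFacet Gh (LMC G Gh) (fun x => x s(a, b)) 1 ↔
      ¬ ∃ u v : V, Gh.Adj u v ∧ ¬ G.Adj u v ∧ s(u, v) ≠ s(a, b) ∧
        IsCutNode G u v a ∧ IsCutNode G u v b := by
  have hE : s(a, b) ∈ Gh.edgeSet := hab
  rw [definesFacet_apply_le_one_iff, Nat.card_coe_set_eq]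
  constructor
  · rintro hdim ⟨u, v, huv, -, hne, ha, hb⟩
    have hpair : {s(a, b), s(u, v)} ⊆ Gh.edgeSet :=
      Set.insert_subset hE (Set.singleton_subset_iff.mpr huv)
    have hupper := finrank_direction_upperFace_le (H := Gh) huv ha hb
    have htwo := Set.ncard_le_ncard hpair
    rw [Set.ncard_sdiff hpair, Set.ncard_pair hne.symm] at hupper
    rw [Set.ncard_pair hne.symm] at htwo
    omega
  · intro hno
    have hupper := finrank_direction_upperFace_le (G := G) hab (isCutNode_left G a b)
      (isCutNode_right G a b)
    have hlower := ncard_le_finrank_direction_upperFace hab hno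
    have hpos := (Set.ncard_pos (Set.toFinite _)).mpr ⟨_, hE⟩
    rw [Set.pair_eq_singleton] at hupper
    rw [Set.ncard_sdiff_singleton_of_mem hE] at hupper hlower
    omega

/-- the inequality `x_e ≤ 1` for `e = s(a,b) ∈ E ∪ F` defines a facet of
`LMC(G, Gh)` iff there is no `uv ∈ F \ {e}` such that both `a` and `b` are
`uv`-cut-nodes with respect to `G`. -/
theorem upper_box_facet_iff
    {V : Type*} [Fintype V] (G Gh : SimpleGraph V)
    (hG : G.Connected) (hle : G ≤ Gh)
    (a b : V) (hab : Gh.Adj a b) :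
    DefinesFacet Gh (LMC G Gh) (fun x => x s(a, b)) 1 ↔
      ¬ ∃ u v : V, Gh.Adj u v ∧ ¬ G.Adj u v ∧ s(u, v) ≠ s(a, b) ∧
        IsCutNode G u v a ∧ IsCutNode G u v b :=
  upper_box_facet_iff_general G Gh a b hab
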